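/- Let f ≥ 2. For two different nodes x_i and x_j in the uniform recursive tree U_g, with labels {i_0, i_1, …, i_{n_i}} and {j_0, j_1, …, j_{n_j}} respectively (where i_0 = j_0 = 0), the diagonal entries of the pseudoinverse L†(g) compare as follows: (1) if n_i > n_j then L†_{x_i x_i}(g) > L†_{x_j x_j}(g); (2) if n_i < n_j then L†_{x_i x_i}(g) < L†_{x_j x_j}(g); (3) if n_i = n_j and there exists an index z with 0 ≤ z ≤ n_i such that i_l = j_l for l = 0,1,…,z−1 but i_z ≠ j_z, then L†_{x_i x_i}(g) > L†_{x_j x_j}(g) if i_z > j_z, and L†_{x_i x_i}(g) < L†_{x_j x_j}(g) if i_z < j_z; (4) if n_i = n_j and i_l = j_l for all l = 0,1,…,n_i, then L†_{x_i x_i}(g) = L†_{x_j x_j}(g). -/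

import Mathlib

open Matrix BigOperators

/-- The vertices of the uniform recursive tree `U_g` with branching parameter `f`:
`U_0` is a single node (the central node), and at each iteration every existing
node receives `f` new leaf children. -/
def URTV (f : ℕ) : ℕ → Type
  | 0 => Unit
  | g + 1 => URTV f g ⊕ (URTV f g × Fin f)

instance urtFintype (f : ℕ) : ∀ g, Fintype (URTV f g)
  | 0 => inferInstanceAs (Fintype Unit)
  | g + 1 =>
    letI := urtFintype f g
    inferInstanceAs (Fintype (URTV f g ⊕ (URTV f g × Fin f)))

instance urtDecEq (f : ℕ) : ∀ g, DecidableEq (URTV f g)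
  | 0 => inferInstanceAs (DecidableEq Unit)
  | g + 1 =>
    letI := urtDecEq f g
    inferInstanceAs (DecidableEq (URTV f g ⊕ (URTV f g × Fin f)))

/-- The adjacency relation of `U_g`: each new leaf is joined to the node it was
attached to. -/
def urtRel (f : ℕ) : ∀ g, URTV f g → URTV f g → Prop
  | 0, _, _ => False
  | g + 1, Sum.inl x, Sum.inl y => urtRel f g x y
  | _ + 1, Sum.inl x, Sum.inr (y, _) => x = y
  | _ + 1, Sum.inr (x, _), Sum.inl y => x = y
  | _ + 1, Sum.inr _, Sum.inr _ => False

/-- The uniform recursive tree `U_g` as a simple graph. -/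
def urtGraph (f g : ℕ) : SimpleGraph (URTV f g) :=
  SimpleGraph.fromRel (urtRel f g)

/-- The central node of `U_g`. -/
def urtCenter (f : ℕ) : ∀ g, URTV f g
  | 0 => ()
  | g + 1 => Sum.inl (urtCenter f g)

/-- The label `{0, i_1, …, i_n}` of a node of `U_g`: the increasing list of levels
(creation iterations) of the nodes on the unique path from the central node to the
node.  The central node has label `[0]`; a node created at iteration `g+1` appends
`g+1` to the label of the node it was attached to. -/
def urtLabel (f : ℕ) : ∀ g, URTV f g → List ℕ
  | 0, _ => [0]
  | g + 1, Sum.inl x => urtLabel f g x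
  | g + 1, Sum.inr (x, _) => urtLabel f g x ++ [g + 1]

/-- The all-ones matrix `J`. -/
def JMat (V : Type*) : Matrix V V ℝ := Matrix.of fun _ _ => (1 : ℝ)

/-- The Laplacian matrix (over `ℝ`) of a simple graph (all edge weights `1`). -/
noncomputable def glap {V : Type*} [Fintype V] (G : SimpleGraph V) : Matrix V V ℝ := by
  classical exact SimpleGraph.lapMatrix ℝ G

/-- The pseudoinverse `L† = (L + (1/N)·J)⁻¹ - (1/N)·J` of the graph Laplacian. -/
noncomputable def gdag {V : Type*} [Fintype V] [DecidableEq V] (G : SimpleGraph V) :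
    Matrix V V ℝ :=
  (glap G + ((Fintype.card V : ℝ))⁻¹ • JMat V)⁻¹ - ((Fintype.card V : ℝ))⁻¹ • JMat V

/-!
For a tree with distance matrix `D`, every row of `L D` is `(2 - deg u) 𝟙ᵀ - 2 eᵤᵀ`: a
neighbour-sum identity saying that from `u ≠ v` exactly one neighbour of `u` is closer to `v`.
Since `L J = 0`, this forces `L† = -½ (I - J/N) D (I - J/N)`, whence `L†_{xx} = T(x)/N - c` with
`T(x) = ∑ᵥ d(x, v)` the transmission of `x` and `c` independent of `x`. Comparing diagonal entries
of `L†` is therefore comparing transmissions.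

In `U_g` the recursive construction gives
`T(x) + 2 ∑_{i ∈ label x} (f+1)^(g-i) = T(center) + (|label x| + 1) (f+1)^g`.
The weighted sum over a strictly increasing label is governed by its first entry where two labels
differ, which gives the lexicographic comparison; it also lies in `[N, 3N/2)` when `f ≥ 2`, so a
longer label always means a larger transmission.
-/

section Pseudoinverse

variable {V : Type*} [Fintype V]

lemma JMat_mul_apply (M : Matrix V V ℝ) (u v : V) : (JMat V * M) u v = ∑ w, M w v := by
  simp [JMat, mul_apply]

lemma mul_JMat_apply (M : Matrix V V ℝ) (u v : V) : (M * JMat V) u v = ∑ w, M u w := by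
  simp [JMat, mul_apply]

lemma JMat_mul_JMat : JMat V * JMat V = (Fintype.card V : ℝ) • JMat V := by
  ext u v
  rw [mul_JMat_apply]
  simp [JMat]

lemma of_mul_JMat (τ : V → ℝ) :
    Matrix.of (fun u (_ : V) => τ u) * JMat V =
      (Fintype.card V : ℝ) • Matrix.of fun u _ => τ u := by
  ext u v
  simp [mul_JMat_apply]

lemma glap_mul_JMat (G : SimpleGraph V) : glap G * JMat V = 0 := by
  classical
  ext u v
  simpa [glap, mul_JMat_apply, mulVec, dotProduct] using
    congrFun (G.lapMatrix_mulVec_const_eq_zero (R := ℝ)) u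

variable [DecidableEq V]

lemma glap_eq_lapMatrix (G : SimpleGraph V) [DecidableRel G.Adj] : glap G = G.lapMatrix ℝ := by
  unfold glap
  congr!

noncomputable def centeringMatrix (V : Type*) [Fintype V] [DecidableEq V] : Matrix V V ℝ :=
  1 - (Fintype.card V : ℝ)⁻¹ • JMat V

lemma mul_centeringMatrix_of_mul_JMat_eq_zero {M : Matrix V V ℝ} (h : M * JMat V = 0) :
    M * centeringMatrix V = M := by
  rw [centeringMatrix, Matrix.mul_sub, Matrix.mul_one, Matrix.mul_smul, h, smul_zero, sub_zero]

variable [Nonempty V]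

lemma mul_centeringMatrix_eq_zero {M : Matrix V V ℝ}
    (h : M * JMat V = (Fintype.card V : ℝ) • M) : M * centeringMatrix V = 0 := by
  rw [centeringMatrix, Matrix.mul_sub, Matrix.mul_one, Matrix.mul_smul, h, smul_smul,
    inv_mul_cancel₀ (by positivity), one_smul, sub_self]

theorem inv_add_smul_JMat_eq {L H : Matrix V V ℝ} (τ : V → ℝ) (hLJ : L * JMat V = 0)
    (hLH : L * H = Matrix.of (fun u _ => τ u) - 2 • 1) :
    (L + (Fintype.card V : ℝ)⁻¹ • JMat V)⁻¹ =
      -(2⁻¹ : ℝ) • (centeringMatrix V * H * centeringMatrix V)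
        + (Fintype.card V : ℝ)⁻¹ • JMat V := by
  set c := (Fintype.card V : ℝ)⁻¹
  have hJJ : c • JMat V * (c • JMat V) = c • JMat V := by
    rw [Matrix.smul_mul, Matrix.mul_smul, JMat_mul_JMat, smul_smul, smul_smul, mul_assoc,
      inv_mul_cancel₀ (by positivity), mul_one]
  apply inv_eq_right_inv
  rw [Matrix.add_mul, Matrix.mul_add, Matrix.mul_add, Matrix.mul_smul, Matrix.mul_smul,
    ← Matrix.mul_assoc, ← Matrix.mul_assoc, mul_centeringMatrix_of_mul_JMat_eq_zero hLJ, hLH,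
    Matrix.sub_mul, mul_centeringMatrix_eq_zero (of_mul_JMat τ), Matrix.mul_smul, hLJ,
    Matrix.smul_mul, Matrix.smul_mul, Matrix.mul_assoc, ← Matrix.mul_assoc (JMat V),
    mul_centeringMatrix_eq_zero JMat_mul_JMat, hJJ]
  simp only [Matrix.one_mul, Matrix.zero_mul, smul_zero, zero_sub, add_zero, centeringMatrix]
  module

theorem gdag_eq_of_glap_mul (G : SimpleGraph V) {H : Matrix V V ℝ} (τ : V → ℝ)
    (hLH : glap G * H = Matrix.of (fun u _ => τ u) - 2 • 1) :
    gdag G = -(2⁻¹ : ℝ) • (centeringMatrix V * H * centeringMatrix V) := by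
  rw [gdag, inv_add_smul_JMat_eq τ (glap_mul_JMat G) hLH, add_sub_cancel_right]

theorem gdag_apply_self_of_glap_mul (G : SimpleGraph V) {H : Matrix V V ℝ} (τ : V → ℝ)
    (hLH : glap G * H = Matrix.of (fun u _ => τ u) - 2 • 1) (hH : H.IsSymm)
    (hdiag : ∀ v, H v v = 0) (x : V) :
    gdag G x x = (Fintype.card V : ℝ)⁻¹ * ∑ v, H x v
      - (Fintype.card V : ℝ)⁻¹ ^ 2 / 2 * ∑ u, ∑ v, H u v := by
  set c := (Fintype.card V : ℝ)⁻¹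
  have hexpand : centeringMatrix V * H * centeringMatrix V
      = H - c • (JMat V * H) - c • (H * JMat V) + c ^ 2 • (JMat V * H * JMat V) := by
    simp only [centeringMatrix, Matrix.sub_mul, Matrix.mul_sub, Matrix.one_mul, Matrix.mul_one,
      Matrix.smul_mul, Matrix.mul_smul]
    module
  have hcol : ∑ w, H w x = ∑ v, H x v := Finset.sum_congr rfl fun w _ => hH.apply x w
  rw [gdag_eq_of_glap_mul G τ hLH, hexpand]
  simp only [Matrix.smul_apply, Matrix.add_apply, Matrix.sub_apply, JMat_mul_apply, mul_JMat_apply,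
    hcol, hdiag, smul_eq_mul]
  rw [Finset.sum_comm]
  ring

end Pseudoinverse

namespace URTV

variable {f g : ℕ}

/- `URTV f (g + 1)` unfolds to a sum type only at default transparency, so `Sum.inl x` used as a
vertex of `U_{g+1}` makes `simp` and `rw` fail; these wrappers carry the right type. -/
def inl (x : URTV f g) : URTV f (g + 1) := Sum.inl x

def inr (p : URTV f g × Fin f) : URTV f (g + 1) := Sum.inr p

@[elab_as_elim]
lemma succ_cases {motive : URTV f (g + 1) → Prop} (inl : ∀ x, motive (inl x))
    (inr : ∀ p, motive (inr p)) (v : URTV f (g + 1)) : motive v :=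
  match v with
  | Sum.inl x => inl x
  | Sum.inr p => inr p

lemma sum_succ {M : Type*} [AddCommMonoid M] (F : URTV f (g + 1) → M) :
    ∑ v, F v = ∑ x, F (inl x) + ∑ p, F (inr p) :=
  Fintype.sum_sum_type F

lemma inl_injective : Function.Injective (inl : URTV f g → URTV f (g + 1)) :=
  Sum.inl_injective

lemma inr_injective : Function.Injective (inr : URTV f g × Fin f → URTV f (g + 1)) :=
  Sum.inr_injective

lemma inl_ne_inr (x : URTV f g) (p : URTV f g × Fin f) : inl x ≠ inr p :=
  Sum.inl_ne_inr

lemma card_eq : Fintype.card (URTV f g) = (f + 1) ^ g := by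
  induction g with
  | zero => rfl
  | succ g ih =>
    rw [show Fintype.card (URTV f (g + 1)) = Fintype.card (URTV f g ⊕ (URTV f g × Fin f)) from
      rfl, Fintype.card_sum, Fintype.card_prod, Fintype.card_fin, ih]
    ring

instance : Nonempty (URTV f g) := ⟨urtCenter f g⟩

end URTV

open URTV

section Structure

variable {f g : ℕ}

lemma urtCenter_succ : urtCenter f (g + 1) = inl (urtCenter f g) := rfl

lemma urtLabel_inl (x : URTV f g) : urtLabel f (g + 1) (inl x) = urtLabel f g x := rfl

lemma urtLabel_inr (p : URTV f g × Fin f) :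
    urtLabel f (g + 1) (inr p) = urtLabel f g p.1 ++ [g + 1] := rfl

lemma urtGraph_adj (x y : URTV f g) :
    (urtGraph f g).Adj x y ↔ x ≠ y ∧ (urtRel f g x y ∨ urtRel f g y x) :=
  SimpleGraph.fromRel_adj _ _ _

lemma urtGraph_adj_inl_inl (x y : URTV f g) :
    (urtGraph f (g + 1)).Adj (inl x) (inl y) ↔ (urtGraph f g).Adj x y :=
  (urtGraph_adj (inl x) (inl y)).trans <| and_congr_left' inl_injective.ne_iff |>.trans
    (urtGraph_adj x y).symm

lemma urtGraph_adj_inl_inr (x : URTV f g) (q : URTV f g × Fin f) :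
    (urtGraph f (g + 1)).Adj (inl x) (inr q) ↔ x = q.1 :=
  (urtGraph_adj (inl x) (inr q)).trans <|
    (and_iff_right (inl_ne_inr x q)).trans (or_iff_left_of_imp Eq.symm)

lemma urtGraph_adj_inr_inl (p : URTV f g × Fin f) (y : URTV f g) :
    (urtGraph f (g + 1)).Adj (inr p) (inl y) ↔ p.1 = y :=
  (urtGraph_adj (inr p) (inl y)).trans <|
    (and_iff_right (inl_ne_inr y p).symm).trans (or_iff_left_of_imp Eq.symm)

lemma not_urtGraph_adj_inr_inr (p q : URTV f g × Fin f) :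
    ¬ (urtGraph f (g + 1)).Adj (inr p) (inr q) :=
  fun h => ((urtGraph_adj (inr p) (inr q)).1 h).2.elim id id

lemma exists_urtLabel_eq_zero_cons (x : URTV f g) : ∃ t, urtLabel f g x = 0 :: t := by
  induction g with
  | zero => exact ⟨[], rfl⟩
  | succ g ih =>
    induction x using succ_cases with
    | inl x => exact ih x
    | inr p =>
      obtain ⟨t, ht⟩ := ih p.1
      exact ⟨t ++ [g + 1], by rw [urtLabel_inr, ht, List.cons_append]⟩

lemma le_of_mem_urtLabel {x : URTV f g} {i : ℕ} (hi : i ∈ urtLabel f g x) : i ≤ g := by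
  induction g with
  | zero => simpa [urtLabel] using hi
  | succ g ih =>
    induction x using succ_cases with
    | inl x => exact (ih hi).trans g.le_succ
    | inr p =>
      rw [urtLabel_inr, List.mem_append, List.mem_singleton] at hi
      exact hi.elim (fun hi => (ih hi).trans g.le_succ) le_of_eq

lemma urtLabel_pairwise_lt (x : URTV f g) : (urtLabel f g x).Pairwise (· < ·) := by
  induction g with
  | zero => simp [urtLabel]
  | succ g ih =>
    induction x using succ_cases with
    | inl x => exact ih x
    | inr p =>
      rw [urtLabel_inr, List.pairwise_append]
      exact ⟨ih p.1, List.pairwise_singleton _ _, fun a ha b hb =>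
        (List.mem_singleton.1 hb).symm ▸ Nat.lt_succ_of_le (le_of_mem_urtLabel ha)⟩

end Structure

/- That this is the graph distance of `U_g` is never needed: symmetry, the zero diagonal and
`sum_neighborFinset_urtDist` already determine `L†`. -/
def urtDist (f : ℕ) : ∀ g, URTV f g → URTV f g → ℕ
  | 0, _, _ => 0
  | g + 1, Sum.inl x, Sum.inl y => urtDist f g x y
  | g + 1, Sum.inl x, Sum.inr q => urtDist f g x q.1 + 1
  | g + 1, Sum.inr p, Sum.inl y => urtDist f g p.1 y + 1
  | g + 1, Sum.inr p, Sum.inr q => if p = q then 0 else urtDist f g p.1 q.1 + 2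

def urtDistMat (f g : ℕ) : Matrix (URTV f g) (URTV f g) ℝ :=
  Matrix.of fun u v => urtDist f g u v

section Distance

variable {f g : ℕ}

lemma urtDist_inl_inl (x y : URTV f g) : urtDist f (g + 1) (inl x) (inl y) = urtDist f g x y := rfl

lemma urtDist_inl_inr (x : URTV f g) (q : URTV f g × Fin f) :
    urtDist f (g + 1) (inl x) (inr q) = urtDist f g x q.1 + 1 := rfl

lemma urtDist_inr_inl (p : URTV f g × Fin f) (y : URTV f g) :
    urtDist f (g + 1) (inr p) (inl y) = urtDist f g p.1 y + 1 := rfl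

lemma urtDist_inr_inr (p q : URTV f g × Fin f) :
    urtDist f (g + 1) (inr p) (inr q) = if p = q then 0 else urtDist f g p.1 q.1 + 2 := rfl

lemma urtDist_self (x : URTV f g) : urtDist f g x x = 0 := by
  induction g with
  | zero => rfl
  | succ g ih =>
    induction x using succ_cases with
    | inl x => rw [urtDist_inl_inl, ih]
    | inr p => rw [urtDist_inr_inr, if_pos rfl]

lemma urtDist_comm (x y : URTV f g) : urtDist f g x y = urtDist f g y x := by
  induction g with
  | zero => rfl
  | succ g ih =>
    induction x using succ_cases <;> induction y using succ_cases
    case inr.inr p q =>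
      simp only [urtDist_inr_inr, ih, eq_comm (a := p)]
    all_goals simp only [urtDist_inl_inl, urtDist_inl_inr, urtDist_inr_inl, ih]

end Distance

section Neighbors

open Classical

variable {f g : ℕ}

lemma urtGraph_sum_neighborFinset_inl {M : Type*} [AddCommMonoid M] (x : URTV f g)
    (F : URTV f (g + 1) → M) :
    ∑ w ∈ (urtGraph f (g + 1)).neighborFinset (inl x), F w
      = ∑ w ∈ (urtGraph f g).neighborFinset x, F (inl w) + ∑ i, F (inr (x, i)) := by
  simp only [SimpleGraph.neighborFinset_eq_filter, Finset.sum_filter, sum_succ,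
    urtGraph_adj_inl_inl, urtGraph_adj_inl_inr, Fintype.sum_prod_type_right]
  simp [Finset.sum_ite_eq]

lemma urtGraph_sum_neighborFinset_inr {M : Type*} [AddCommMonoid M] (p : URTV f g × Fin f)
    (F : URTV f (g + 1) → M) :
    ∑ w ∈ (urtGraph f (g + 1)).neighborFinset (inr p), F w = F (inl p.1) := by
  simp only [SimpleGraph.neighborFinset_eq_filter, Finset.sum_filter, sum_succ,
    urtGraph_adj_inr_inl, not_urtGraph_adj_inr_inr]
  simp [Finset.sum_ite_eq]

lemma urtGraph_degree_inl (x : URTV f g) :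
    (urtGraph f (g + 1)).degree (inl x) = (urtGraph f g).degree x + f := by
  simpa [← SimpleGraph.card_neighborFinset_eq_degree] using
    urtGraph_sum_neighborFinset_inl x (fun _ => (1 : ℕ))

lemma urtGraph_degree_inr (p : URTV f g × Fin f) : (urtGraph f (g + 1)).degree (inr p) = 1 := by
  simpa [← SimpleGraph.card_neighborFinset_eq_degree] using
    urtGraph_sum_neighborFinset_inr p (fun _ => (1 : ℕ))

lemma sum_urtDist_inr_inr (x : URTV f g) (q : URTV f g × Fin f) :
    ∑ i, urtDist f (g + 1) (inr (x, i)) (inr q) + (if x = q.1 then 2 else 0)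
      = f * (urtDist f g x q.1 + 2) := by
  obtain ⟨y, j⟩ := q
  simp only [urtDist_inr_inr, Prod.mk.injEq]
  by_cases hxy : x = y
  · subst hxy
    have hf : 0 < f := j.pos
    simp [urtDist_self, Finset.sum_ite, Finset.filter_ne']
    omega
  · simp [hxy]

/- For `u ≠ v`: `∑_{w ~ u} d(w, v) = deg u * (d(u, v) + 1) - 2`, as exactly one neighbour of `u`
lies on the path to `v`. -/
lemma sum_neighborFinset_urtDist (u v : URTV f g) :
    ∑ w ∈ (urtGraph f g).neighborFinset u, urtDist f g w v + 2
      = (urtGraph f g).degree u * (urtDist f g u v + 1) + if u = v then 2 else 0 := by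
  induction g with
  | zero =>
    have hN : (urtGraph f 0).neighborFinset u = ∅ := by
      ext w
      simp [urtGraph_adj, urtRel]
    obtain rfl : u = v := rfl
    simp [← SimpleGraph.card_neighborFinset_eq_degree, hN]
  | succ g ih =>
    induction u using succ_cases with
    | inl x =>
      induction v using succ_cases with
      | inl y =>
        have hxy := ih x y
        simp only [urtGraph_sum_neighborFinset_inl, urtGraph_degree_inl, urtDist_inl_inl,
          urtDist_inr_inl, inl_injective.eq_iff, Finset.sum_const, Finset.card_univ,
          Fintype.card_fin, smul_eq_mul]
        linarith
      | inr q =>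
        have hxq := ih x q.1
        have hleaves := sum_urtDist_inr_inr x q
        simp only [urtGraph_sum_neighborFinset_inl, urtGraph_degree_inl, urtDist_inl_inr,
          Finset.sum_add_distrib, Finset.sum_const, smul_eq_mul,
          SimpleGraph.card_neighborFinset_eq_degree, if_neg (inl_ne_inr x q)]
        linarith
    | inr p =>
      rw [urtGraph_sum_neighborFinset_inr, urtGraph_degree_inr]
      induction v using succ_cases with
      | inl y => simp [urtDist_inl_inl, urtDist_inr_inl, (inl_ne_inr y p).symm]
      | inr q =>
        simp only [urtDist_inl_inr, urtDist_inr_inr, inr_injective.eq_iff]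
        split_ifs with h
        · simp [h, urtDist_self]
        · ring

lemma glap_mul_urtDistMat :
    glap (urtGraph f g) * urtDistMat f g
      = Matrix.of (fun u _ => 2 - ((urtGraph f g).degree u : ℝ)) - 2 • 1 := by
  ext u v
  have h := congrArg (Nat.cast : ℕ → ℝ) (sum_neighborFinset_urtDist u v)
  push_cast at h
  rw [glap_eq_lapMatrix, SimpleGraph.lapMatrix, Matrix.sub_mul, SimpleGraph.degMatrix,
    Matrix.sub_apply, Matrix.diagonal_mul, SimpleGraph.adjMatrix_mul_apply]
  simp only [Matrix.sub_apply, Matrix.of_apply, Matrix.smul_apply, Matrix.one_apply,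
    urtDistMat] at h ⊢
  split_ifs at h ⊢ with huv
  · subst huv
    simp only [urtDist_self, CharP.cast_eq_zero, nsmul_eq_mul, Nat.cast_ofNat] at h ⊢
    linarith
  · rw [smul_zero]
    linarith

end Neighbors

def urtTransmission (f g : ℕ) (x : URTV f g) : ℕ := ∑ v, urtDist f g x v

section Transmission

variable {f g : ℕ}

lemma gdag_urtGraph_apply_self (x : URTV f g) :
    gdag (urtGraph f g) x x = ((f + 1 : ℝ) ^ g)⁻¹ * urtTransmission f g x
      - ((f + 1 : ℝ) ^ g)⁻¹ ^ 2 / 2 * ∑ u, (urtTransmission f g u : ℝ) := by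
  have hsymm : (urtDistMat f g).IsSymm :=
    Matrix.IsSymm.ext fun u v => by simp [urtDistMat, urtDist_comm]
  rw [gdag_apply_self_of_glap_mul _ _ glap_mul_urtDistMat hsymm
    (by simp [urtDistMat, urtDist_self])]
  simp [urtDistMat, urtTransmission, URTV.card_eq]

lemma gdag_urtGraph_lt_iff (x y : URTV f g) :
    gdag (urtGraph f g) y y < gdag (urtGraph f g) x x ↔
      urtTransmission f g y < urtTransmission f g x := by
  rw [gdag_urtGraph_apply_self, gdag_urtGraph_apply_self, sub_lt_sub_iff_right,
    mul_lt_mul_iff_right₀ (by positivity), Nat.cast_lt]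

lemma gdag_urtGraph_eq (x y : URTV f g) (h : urtTransmission f g x = urtTransmission f g y) :
    gdag (urtGraph f g) x x = gdag (urtGraph f g) y y := by
  rw [gdag_urtGraph_apply_self, gdag_urtGraph_apply_self, h]

lemma urtTransmission_inl (x : URTV f g) :
    urtTransmission f (g + 1) (inl x) = (f + 1) * urtTransmission f g x + f * (f + 1) ^ g := by
  simp only [urtTransmission, sum_succ, urtDist_inl_inl, urtDist_inl_inr, Fintype.sum_prod_type,
    Finset.sum_const, Finset.card_univ, Fintype.card_fin, smul_eq_mul, ← Finset.mul_sum,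
    Finset.sum_add_distrib, Fintype.card_prod, URTV.card_eq]
  ring

lemma urtTransmission_inr (p : URTV f g × Fin f) :
    urtTransmission f (g + 1) (inr p) + 2
      = urtTransmission f (g + 1) (inl p.1) + (f + 1) ^ (g + 1) := by
  have hpt : ∀ v, urtDist f (g + 1) (inr p) v + (if v = inr p then 2 else 0)
      = urtDist f (g + 1) (inl p.1) v + 1 := by
    intro v
    induction v using succ_cases with
    | inl y => simp [urtDist_inr_inl, urtDist_inl_inl, (inl_ne_inr y p)]
    | inr q =>
      simp only [urtDist_inr_inr, urtDist_inl_inr, inr_injective.eq_iff]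
      split_ifs <;> simp_all [urtDist_self]
  have := Finset.sum_congr rfl fun v (_ : v ∈ Finset.univ) => hpt v
  simpa [urtTransmission, Finset.sum_add_distrib, URTV.card_eq] using this

end Transmission

/- `(f + 1) ^ (g - i)` is the number of nodes of `U_g` in the subtree of a node created at level
`i`. -/
def levelWeight (f g : ℕ) (l : List ℕ) : ℕ := (l.map fun i => (f + 1) ^ (g - i)).sum

section LevelWeight

variable {f g : ℕ}

@[simp] lemma levelWeight_nil : levelWeight f g [] = 0 := rfl

@[simp] lemma levelWeight_cons (a : ℕ) (l : List ℕ) :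
    levelWeight f g (a :: l) = (f + 1) ^ (g - a) + levelWeight f g l := rfl

@[simp] lemma levelWeight_append (l₁ l₂ : List ℕ) :
    levelWeight f g (l₁ ++ l₂) = levelWeight f g l₁ + levelWeight f g l₂ := by
  simp [levelWeight]

lemma levelWeight_succ {l : List ℕ} (h : ∀ i ∈ l, i ≤ g) :
    levelWeight f (g + 1) l = (f + 1) * levelWeight f g l := by
  induction l with
  | nil => rfl
  | cons a l ih =>
    simp only [List.forall_mem_cons] at h
    rw [levelWeight_cons, levelWeight_cons, ih h.2, Nat.succ_sub h.1, pow_succ]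
    ring

lemma mul_levelWeight_cons_lt {a : ℕ} {l : List ℕ} (hl : (a :: l).Pairwise (· < ·))
    (hg : ∀ i ∈ a :: l, i ≤ g) : f * levelWeight f g (a :: l) < (f + 1) ^ (g + 1 - a) := by
  induction l generalizing a with
  | nil =>
    rw [levelWeight_cons, levelWeight_nil, add_zero, Nat.succ_sub (hg a (by simp)), pow_succ]
    nlinarith [Nat.one_le_pow (g - a) (f + 1) (by omega)]
  | cons b l ih =>
    have hab : a < b := List.rel_of_pairwise_cons hl (by simp)
    have hb := ih hl.of_cons fun i hi => hg i (List.mem_cons_of_mem a hi)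
    have hpow : (f + 1) ^ (g + 1 - b) ≤ (f + 1) ^ (g - a) :=
      Nat.pow_le_pow_right (by omega) (by omega)
    rw [levelWeight_cons, Nat.succ_sub (hg a (by simp)), pow_succ]
    linarith

lemma levelWeight_lt_of_getD_lt (hf : 0 < f) {A B : List ℕ} (hA : A.Pairwise (· < ·))
    (hAg : ∀ i ∈ A, i ≤ g) {z : ℕ} (hzA : z < A.length)
    (hzB : z < B.length) (hpre : ∀ l < z, A.getD l 0 = B.getD l 0)
    (hz : B.getD z 0 < A.getD z 0) : levelWeight f g A < levelWeight f g B := by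
  have htake : A.take z = B.take z := by
    refine List.ext_getElem (by simp; omega) fun i h₁ h₂ => ?_
    simp only [List.length_take] at h₁ h₂
    have := hpre i (by omega)
    rwa [List.getD_eq_getElem _ _ (by omega), List.getD_eq_getElem _ _ (by omega),
      ← List.getElem_take (j := z), ← List.getElem_take (xs := B) (j := z)] at this
  rw [List.getD_eq_getElem _ _ hzA, List.getD_eq_getElem _ _ hzB] at hz
  have hdropA := List.drop_eq_getElem_cons hzA
  have hdropB := List.drop_eq_getElem_cons hzB
  have hsorted : (A[z] :: A.drop (z + 1)).Pairwise (· < ·) :=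
    hdropA ▸ hA.sublist (List.drop_sublist z A)
  have hbound := mul_levelWeight_cons_lt (f := f) hsorted
    fun i hi => hAg i (List.mem_of_mem_drop (hdropA ▸ hi))
  have hpow : (f + 1) ^ (g + 1 - A[z]) ≤ (f + 1) ^ (g - B[z]) :=
    Nat.pow_le_pow_right (by omega) (by have := hAg _ (List.getElem_mem hzA); omega)
  have hdrop : levelWeight f g (A.drop z) < (f + 1) ^ (g - B[z]) := calc
    levelWeight f g (A.drop z) ≤ f * levelWeight f g (A.drop z) := Nat.le_mul_of_pos_left _ hf
    _ < (f + 1) ^ (g + 1 - A[z]) := hdropA ▸ hbound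
    _ ≤ (f + 1) ^ (g - B[z]) := hpow
  rw [← List.take_append_drop z A, ← List.take_append_drop z B, htake, levelWeight_append,
    levelWeight_append, hdropB, levelWeight_cons]
  omega

end LevelWeight

section Comparison

variable {f g : ℕ}

lemma pow_le_levelWeight_urtLabel (x : URTV f g) :
    (f + 1) ^ g ≤ levelWeight f g (urtLabel f g x) := by
  obtain ⟨t, ht⟩ := exists_urtLabel_eq_zero_cons x
  rw [ht, levelWeight_cons, Nat.sub_zero]
  exact Nat.le_add_right _ _

lemma two_mul_levelWeight_urtLabel_lt (hf : 2 ≤ f) (x : URTV f g) :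
    2 * levelWeight f g (urtLabel f g x) < 3 * (f + 1) ^ g := by
  obtain ⟨t, ht⟩ := exists_urtLabel_eq_zero_cons x
  have h := mul_levelWeight_cons_lt (f := f) (ht ▸ urtLabel_pairwise_lt x)
    fun i hi => le_of_mem_urtLabel (ht ▸ hi)
  rw [← ht, Nat.sub_zero, pow_succ] at h
  nlinarith

lemma urtTransmission_add_two_mul_levelWeight (x : URTV f g) :
    urtTransmission f g x + 2 * levelWeight f g (urtLabel f g x)
      = urtTransmission f g (urtCenter f g) + ((urtLabel f g x).length + 1) * (f + 1) ^ g := by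
  induction g with
  | zero => simp [urtTransmission, urtDist, urtLabel, levelWeight]
  | succ g ih =>
    have hinl : ∀ x : URTV f g, urtTransmission f (g + 1) (inl x)
        + 2 * levelWeight f (g + 1) (urtLabel f (g + 1) (inl x))
        = urtTransmission f (g + 1) (urtCenter f (g + 1))
          + ((urtLabel f (g + 1) (inl x)).length + 1) * (f + 1) ^ (g + 1) := by
      intro x
      rw [urtLabel_inl, urtCenter_succ, urtTransmission_inl, urtTransmission_inl,
        levelWeight_succ fun _ => le_of_mem_urtLabel, pow_succ]
      linear_combination (f + 1) * ih x
    induction x using succ_cases with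
    | inl x => exact hinl x
    | inr p =>
      have h := urtTransmission_inr p
      have h' := hinl p.1
      rw [urtLabel_inl] at h'
      rw [urtLabel_inr, levelWeight_append, List.length_append]
      simp only [levelWeight_cons, levelWeight_nil, Nat.sub_self, pow_zero, List.length_singleton]
      linear_combination h + h'

lemma urtTransmission_lt_of_length_lt (hf : 2 ≤ f) {x y : URTV f g}
    (h : (urtLabel f g y).length < (urtLabel f g x).length) :
    urtTransmission f g y < urtTransmission f g x := by
  have hx := urtTransmission_add_two_mul_levelWeight x
  have hy := urtTransmission_add_two_mul_levelWeight y
  have hWx := two_mul_levelWeight_urtLabel_lt hf x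
  have hWy := pow_le_levelWeight_urtLabel (f := f) y
  have hlen := Nat.mul_le_mul_right ((f + 1) ^ g) (Nat.succ_le_of_lt h)
  linarith

lemma urtTransmission_lt_of_getD_lt (hf : 0 < f) {x y : URTV f g}
    (hlen : (urtLabel f g x).length = (urtLabel f g y).length) {z : ℕ}
    (hz : z < (urtLabel f g x).length)
    (hpre : ∀ l < z, (urtLabel f g x).getD l 0 = (urtLabel f g y).getD l 0)
    (hlt : (urtLabel f g y).getD z 0 < (urtLabel f g x).getD z 0) :
    urtTransmission f g y < urtTransmission f g x := by
  have hW := levelWeight_lt_of_getD_lt hf (urtLabel_pairwise_lt x) (fun _ => le_of_mem_urtLabel)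
    hz (hlen ▸ hz) hpre hlt
  have hx := urtTransmission_add_two_mul_levelWeight x
  have hy := urtTransmission_add_two_mul_levelWeight y
  rw [hlen] at hx
  omega

lemma urtTransmission_eq_of_urtLabel_eq {x y : URTV f g} (h : urtLabel f g x = urtLabel f g y) :
    urtTransmission f g x = urtTransmission f g y := by
  have hx := urtTransmission_add_two_mul_levelWeight x
  have hy := urtTransmission_add_two_mul_levelWeight y
  rw [h] at hx
  omega

end Comparison

theorem stmt_19_general (f : ℕ) (hf : 2 ≤ f) (g : ℕ) (x y : URTV f g) :
    ((urtLabel f g x).length > (urtLabel f g y).length →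
      gdag (urtGraph f g) x x > gdag (urtGraph f g) y y) ∧
    ((urtLabel f g x).length < (urtLabel f g y).length →
      gdag (urtGraph f g) x x < gdag (urtGraph f g) y y) ∧
    ((urtLabel f g x).length = (urtLabel f g y).length →
      ∀ z < (urtLabel f g x).length,
        (∀ l < z, (urtLabel f g x).getD l 0 = (urtLabel f g y).getD l 0) →
        (urtLabel f g x).getD z 0 ≠ (urtLabel f g y).getD z 0 →
        (((urtLabel f g x).getD z 0 > (urtLabel f g y).getD z 0 →
            gdag (urtGraph f g) x x > gdag (urtGraph f g) y y) ∧
         ((urtLabel f g x).getD z 0 < (urtLabel f g y).getD z 0 →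
            gdag (urtGraph f g) x x < gdag (urtGraph f g) y y))) ∧
    (urtLabel f g x = urtLabel f g y →
      gdag (urtGraph f g) x x = gdag (urtGraph f g) y y) := by
  refine ⟨fun h => ?_, fun h => ?_, fun hlen z hz hpre _ => ⟨fun h => ?_, fun h => ?_⟩,
    fun h => gdag_urtGraph_eq x y (urtTransmission_eq_of_urtLabel_eq h)⟩
  · exact (gdag_urtGraph_lt_iff x y).2 (urtTransmission_lt_of_length_lt hf h)
  · exact (gdag_urtGraph_lt_iff y x).2 (urtTransmission_lt_of_length_lt hf h)
  · exact (gdag_urtGraph_lt_iff x y).2 (urtTransmission_lt_of_getD_lt (by omega) hlen hz hpre h)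
  · exact (gdag_urtGraph_lt_iff y x).2 <| urtTransmission_lt_of_getD_lt (by omega) hlen.symm
      (hlen ▸ hz) (fun l hl => (hpre l hl).symm) h

/-- For `f ≥ 2`, comparison of the diagonal entries of the pseudoinverse `L†(g)` of
the Laplacian of the uniform recursive tree `U_g` for two different nodes `x`, `y`
with labels `{i_0, …, i_{n_i}}` and `{j_0, …, j_{n_j}}` (so the label lists have
lengths `n_i + 1` and `n_j + 1`):
(1) if `n_i > n_j` then `L†_{xx} > L†_{yy}`;
(2) if `n_i < n_j` then `L†_{xx} < L†_{yy}`;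
(3) if `n_i = n_j` and the labels first differ at position `z`, then
    `L†_{xx} > L†_{yy}` when `i_z > j_z` and `L†_{xx} < L†_{yy}` when `i_z < j_z`;
(4) if the labels coincide, then `L†_{xx} = L†_{yy}`. -/
theorem stmt_19 (f : ℕ) (hf : 2 ≤ f) (g : ℕ) (x y : URTV f g) (hxy : x ≠ y) :
    ((urtLabel f g x).length > (urtLabel f g y).length →
      gdag (urtGraph f g) x x > gdag (urtGraph f g) y y) ∧
    ((urtLabel f g x).length < (urtLabel f g y).length →
      gdag (urtGraph f g) x x < gdag (urtGraph f g) y y) ∧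
    ((urtLabel f g x).length = (urtLabel f g y).length →
      ∀ z < (urtLabel f g x).length,
        (∀ l < z, (urtLabel f g x).getD l 0 = (urtLabel f g y).getD l 0) →
        (urtLabel f g x).getD z 0 ≠ (urtLabel f g y).getD z 0 →
        (((urtLabel f g x).getD z 0 > (urtLabel f g y).getD z 0 →
            gdag (urtGraph f g) x x > gdag (urtGraph f g) y y) ∧
         ((urtLabel f g x).getD z 0 < (urtLabel f g y).getD z 0 →
            gdag (urtGraph f g) x x < gdag (urtGraph f g) y y))) ∧
    (urtLabel f g x = urtLabel f g y →
      gdag (urtGraph f g) x x = gdag (urtGraph f g) y y) :=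
  stmt_19_general f hf g x y
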